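/- Let G be a graph with a 3-edge-cut {eA, eB, eC} separating G1 and G2, and suppose for some x ∈ {A,B,C} that both cp(G1^{BC-type graph obtained by joining the two attachments other than x}) = cp(G1) + 1 and likewise cp(G2 with the analogous added edge) = cp(G2) + 1. Then cp(G) ≥ cp(G1) + cp(G2) + 1. -/

import Mathlib

/- A multigraph on vertex type `V` is represented by its multiset of edges,
   each edge being an unordered pair (`Sym2 V`); loops are `s(v, v)` and
   parallel edges are repeated elements of the multiset. -/

open Classical

namespace MG

variable {V : Type*}

/-- Degree of a vertex (a loop counts twice). -/
noncomputable def deg (G : Multiset (Sym2 V)) (v : V) : ℕ :=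
  (G.map fun e => if e = s(v, v) then 2 else if v ∈ e then 1 else 0).sum

/-- The vertices touched by some edge. -/
def support (G : Multiset (Sym2 V)) : Set V := {v | ∃ e ∈ G, v ∈ e}

/-- Adjacency. -/
def Adj (G : Multiset (Sym2 V)) (a b : V) : Prop := s(a, b) ∈ G

/-- Reachability. -/
def Reach (G : Multiset (Sym2 V)) : V → V → Prop := Relation.ReflTransGen (Adj G)

/-- Connectedness (of the non-isolated vertices). -/
def Conn (G : Multiset (Sym2 V)) : Prop :=
  (support G).Nonempty ∧ ∀ a ∈ support G, ∀ b ∈ support G, Reach G a b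

/-- A multigraph is a cycle iff it is nonempty, connected and 2-regular. -/
def IsCycle (C : Multiset (Sym2 V)) : Prop :=
  C ≠ 0 ∧ Conn C ∧ ∀ v ∈ support C, deg C v = 2

/-- A forest contains no cycle. -/
def IsForest (G : Multiset (Sym2 V)) : Prop := ∀ C ≤ G, ¬ IsCycle C

/-- Delete a set of vertices (removing all incident edges). -/
noncomputable def deleteVerts (G : Multiset (Sym2 V)) (S : Set V) : Multiset (Sym2 V) :=
  G.filter fun e => ∀ v ∈ e, v ∉ S

/-- Minimum size of a feedback vertex set. -/
noncomputable def fvs (G : Multiset (Sym2 V)) : ℕ :=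
  sInf {n | ∃ S : Finset V, S.card = n ∧ IsForest (deleteVerts G ↑S)}

/-- `f` is a packing of `n` pairwise vertex-disjoint cycles in `G`. -/
def IsCyclePackingOn (G : Multiset (Sym2 V)) {n : ℕ} (f : Fin n → Multiset (Sym2 V)) : Prop :=
  (∀ i, f i ≤ G ∧ IsCycle (f i)) ∧
    ∀ i j, i ≠ j → Disjoint (support (f i)) (support (f j))

/-- Maximum size of a cycle packing. -/
noncomputable def cp (G : Multiset (Sym2 V)) : ℕ :=
  sSup {n | ∃ f : Fin n → Multiset (Sym2 V), IsCyclePackingOn G f}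

/-- `H` is a minor of the multigraph `G` (branch-set definition). -/
def HasMinor {W : Type*} (G : Multiset (Sym2 V)) (H : SimpleGraph W) : Prop :=
  ∃ B : W → Set V, (∀ w, (B w).Nonempty) ∧
    (∀ w w', w ≠ w' → Disjoint (B w) (B w')) ∧
    (∀ w, ∀ a ∈ B w, ∀ b ∈ B w,
      Relation.ReflTransGen (fun x y => Adj G x y ∧ x ∈ B w ∧ y ∈ B w) a b) ∧
    (∀ w w', H.Adj w w' → ∃ a ∈ B w, ∃ b ∈ B w', Adj G a b)

/-- Planarity, via Wagner's characterization: no `K₅` minor and no `K₃,₃` minor. -/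
def Planar (G : Multiset (Sym2 V)) : Prop :=
  ¬ HasMinor G (SimpleGraph.completeGraph (Fin 5)) ∧
    ¬ HasMinor G (completeBipartiteGraph (Fin 3) (Fin 3))

/-- All degrees are at most 3. -/
def Subcubic (G : Multiset (Sym2 V)) : Prop := ∀ v, deg G v ≤ 3

/-- `H` is a connected component of `M`. -/
def IsComponent (M H : Multiset (Sym2 V)) : Prop :=
  H ≤ M ∧ Conn H ∧ ∀ e ∈ M - H, ∀ v ∈ e, v ∉ support H

end MG

/-! A maximum cycle packing of `G₁ + a₁b₁` of size `cp G₁ + 1` must use the new edge, and its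
other cycles pack `G₁`; likewise on the other side. The two cycles through `a₁b₁` and `a₂b₂` lie
in disjoint parts of `G`, so exchanging these edges for the cut edges `a₁a₂` and `b₁b₂` merges
them into one cycle of `G`, disjoint from the remaining `cp G₁ + cp G₂` cycles. -/

namespace MG

variable {V : Type*}

lemma support_mono {G H : Multiset (Sym2 V)} (h : G ≤ H) : support G ⊆ support H :=
  fun _ ⟨e, he, hv⟩ => ⟨e, Multiset.mem_of_le h he, hv⟩

@[simp]
lemma support_zero : support (0 : Multiset (Sym2 V)) = ∅ := by
  simp [support]

lemma support_cons_mk (a b : V) (G : Multiset (Sym2 V)) :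
    support (s(a, b) ::ₘ G) = {a, b} ∪ support G := by
  ext v
  simp [support, eq_comm]

lemma support_add (G H : Multiset (Sym2 V)) : support (G + H) = support G ∪ support H := by
  ext v
  simp [support, or_and_right, exists_or]

lemma support_finite (G : Multiset (Sym2 V)) : (support G).Finite := by
  induction G using Multiset.induction_on with
  | empty => simp
  | cons e G ih =>
    induction e using Sym2.ind with
    | h a b => rw [support_cons_mk]; exact (Set.toFinite _).union ih

lemma deg_add (G H : Multiset (Sym2 V)) (v : V) : deg (G + H) v = deg G v + deg H v := by
  simp [deg]

lemma deg_cons_mk (a b v : V) (G : Multiset (Sym2 V)) :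
    deg (s(a, b) ::ₘ G) v = (if v = a then 1 else 0) + (if v = b then 1 else 0) + deg G v := by
  simp only [deg, Multiset.map_cons, Multiset.sum_cons, Sym2.eq_iff, Sym2.mem_iff]
  split_ifs <;> grind

lemma deg_eq_zero_of_notMem_support {G : Multiset (Sym2 V)} {v : V} (hv : v ∉ support G) :
    deg G v = 0 := by
  refine Multiset.sum_eq_zero fun n hn => ?_
  obtain ⟨e, he, rfl⟩ := Multiset.mem_map.mp hn
  have hve : v ∉ e := fun h => hv ⟨e, he, h⟩
  rw [if_neg (by rintro rfl; simp at hve), if_neg hve]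

lemma Adj.symm {G : Multiset (Sym2 V)} {a b : V} (h : Adj G a b) : Adj G b a := by
  rwa [Adj, Sym2.eq_swap]

lemma Reach.symm {G : Multiset (Sym2 V)} {a b : V} (h : Reach G a b) : Reach G b a := by
  induction h with
  | refl => exact .refl
  | tail _ hcb ih => exact .head hcb.symm ih

lemma Reach.mono {G H : Multiset (Sym2 V)} (hGH : G ≤ H) {a b : V} (h : Reach G a b) :
    Reach H a b :=
  Relation.ReflTransGen.mono (fun _ _ hab => Multiset.mem_of_le hGH hab) _ _ h

lemma Reach.mem_support {G : Multiset (Sym2 V)} {a b : V} (h : Reach G a b) (hab : a ≠ b) :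
    b ∈ support G := by
  obtain rfl | ⟨c, -, hcb⟩ := h.cases_tail
  · exact absurd rfl hab
  · exact ⟨s(c, b), hcb, Sym2.mem_mk_right c b⟩

lemma even_sum_deg_of_adj_closed {G : Multiset (Sym2 V)} {S : Finset V}
    (hS : ∀ p q, Adj G p q → p ∈ S → q ∈ S) : Even (∑ v ∈ S, deg G v) := by
  induction G using Multiset.induction_on with
  | empty => simp [deg]
  | cons e G ih =>
    induction e using Sym2.ind with
    | h p q =>
      have hpq : p ∈ S ↔ q ∈ S :=
        ⟨hS p q (Multiset.mem_cons_self _ _), hS q p (Adj.symm (Multiset.mem_cons_self _ _))⟩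
      have ih' := ih fun a b hab => hS a b (Multiset.mem_cons_of_mem hab)
      simp only [deg_cons_mk, Finset.sum_add_distrib, Finset.sum_ite_eq']
      by_cases hp : p ∈ S <;> simp [hp, ← hpq, ih', Nat.even_add]

/-- Deleting an edge of a cycle leaves its ends connected: otherwise the vertices reachable
from one end would have odd degree sum. -/
lemma IsCycle.reach_of_cons {x y : V} {E : Multiset (Sym2 V)} (hC : IsCycle (s(x, y) ::ₘ E)) :
    Reach E x y := by
  by_contra hxy
  have hne : x ≠ y := by rintro rfl; exact hxy .refl
  have hfin : {v | Reach E x v}.Finite :=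
    ((support_finite E).insert x).subset fun v hv =>
      (eq_or_ne x v).elim (fun h => .inl h.symm) fun h => .inr (Reach.mem_support hv h)
  set S := hfin.toFinset
  have hxS : x ∈ S := hfin.mem_toFinset.mpr .refl
  have hdeg : ∀ v, v ∈ support (s(x, y) ::ₘ E) → deg E v + (if v = x then 1 else 0) +
      (if v = y then 1 else 0) = 2 := by
    intro v hv
    have := hC.2.2 v hv
    rw [deg_cons_mk] at this
    omega
  have hdegx : deg E x = 1 := by
    have := hdeg x (by simp [support_cons_mk])
    rw [if_pos rfl, if_neg hne] at this
    omega
  have hdegS : ∀ v ∈ S.erase x, deg E v = 2 := by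
    intro v hv
    obtain ⟨hvx, hvS⟩ := Finset.mem_erase.mp hv
    have hvE : Reach E x v := hfin.mem_toFinset.mp hvS
    have hvy : v ≠ y := by rintro rfl; exact hxy hvE
    simpa [hvx, hvy] using
      hdeg v (support_mono (Multiset.le_cons_self _ _) (hvE.mem_support hvx.symm))
  have heven := even_sum_deg_of_adj_closed (G := E) (S := S) fun p q hpq hp =>
    hfin.mem_toFinset.mpr ((hfin.mem_toFinset.mp hp).tail hpq)
  rw [← Finset.add_sum_erase S _ hxS, hdegx, Finset.sum_congr rfl hdegS, Finset.sum_const,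
    smul_eq_mul] at heven
  obtain ⟨k, hk⟩ := heven
  omega

lemma IsCycle.reach_of_reach_cons {x y u v : V} {E : Multiset (Sym2 V)}
    (hC : IsCycle (s(x, y) ::ₘ E)) (h : Reach (s(x, y) ::ₘ E) u v) : Reach E u v := by
  refine Relation.ReflTransGen.lift' id (fun a b hab => ?_) _ _ h
  rcases Multiset.mem_cons.mp hab with hxy | hE
  · rcases Sym2.eq_iff.mp hxy with ⟨rfl, rfl⟩ | ⟨rfl, rfl⟩
    exacts [hC.reach_of_cons, hC.reach_of_cons.symm]
  · exact .single hE

section Exchange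

variable (a₁ b₁ a₂ b₂ : V) (E₁ E₂ : Multiset (Sym2 V))

lemma support_exchange :
    support (s(a₁, a₂) ::ₘ s(b₁, b₂) ::ₘ (E₁ + E₂)) =
      support (s(a₁, b₁) ::ₘ E₁) ∪ support (s(a₂, b₂) ::ₘ E₂) := by
  simp only [support_cons_mk, support_add]
  ext v
  simp only [Set.mem_union, Set.mem_insert_iff, Set.mem_singleton_iff]
  tauto

lemma deg_exchange (v : V) :
    deg (s(a₁, a₂) ::ₘ s(b₁, b₂) ::ₘ (E₁ + E₂)) v =
      deg (s(a₁, b₁) ::ₘ E₁) v + deg (s(a₂, b₂) ::ₘ E₂) v := by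
  simp only [deg_cons_mk, deg_add]
  omega

end Exchange

lemma IsCycle.exchange {a₁ b₁ a₂ b₂ : V} {E₁ E₂ : Multiset (Sym2 V)}
    (h₁ : IsCycle (s(a₁, b₁) ::ₘ E₁)) (h₂ : IsCycle (s(a₂, b₂) ::ₘ E₂))
    (hd : Disjoint (support (s(a₁, b₁) ::ₘ E₁)) (support (s(a₂, b₂) ::ₘ E₂))) :
    IsCycle (s(a₁, a₂) ::ₘ s(b₁, b₂) ::ₘ (E₁ + E₂)) := by
  set D := s(a₁, a₂) ::ₘ s(b₁, b₂) ::ₘ (E₁ + E₂)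
  have ha₁ : a₁ ∈ support (s(a₁, b₁) ::ₘ E₁) := by simp [support_cons_mk]
  have ha₂ : a₂ ∈ support (s(a₂, b₂) ::ₘ E₂) := by simp [support_cons_mk]
  have hE₁ : E₁ ≤ D := (Multiset.le_add_right _ _).trans
    ((Multiset.le_cons_self _ _).trans (Multiset.le_cons_self _ _))
  have hE₂ : E₂ ≤ D := (Multiset.le_add_left _ _).trans
    ((Multiset.le_cons_self _ _).trans (Multiset.le_cons_self _ _))
  have hreach : ∀ v ∈ support D, Reach D v a₁ := by
    rw [support_exchange]
    rintro v (hv | hv)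
    · exact (h₁.reach_of_reach_cons (h₁.2.1.2 v hv a₁ ha₁)).mono hE₁
    · exact ((h₂.reach_of_reach_cons (h₂.2.1.2 v hv a₂ ha₂)).mono hE₂).tail
        (Adj.symm (Multiset.mem_cons_self _ _))
  refine ⟨Multiset.cons_ne_zero, ⟨⟨a₁, by simp [D, support_cons_mk]⟩,
    fun u hu w hw => (hreach u hu).trans (hreach w hw).symm⟩, fun v hv => ?_⟩
  rw [support_exchange] at hv
  rw [deg_exchange]
  rcases hv with hv | hv
  · rw [h₁.2.2 v hv, deg_eq_zero_of_notMem_support (Set.disjoint_left.mp hd hv)]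
  · rw [h₂.2.2 v hv, deg_eq_zero_of_notMem_support (Set.disjoint_right.mp hd hv)]

namespace IsCyclePackingOn

variable {G H : Multiset (Sym2 V)} {m n : ℕ} {f : Fin n → Multiset (Sym2 V)}

lemma notMem_of_mem (hf : IsCyclePackingOn G f) {i j : Fin n} (hij : i ≠ j) {e : Sym2 V}
    (he : e ∈ f i) : e ∉ f j := fun he' =>
  Set.disjoint_left.mp (hf.2 i j hij) ⟨e, he, e.out_fst_mem⟩ ⟨e, he', e.out_fst_mem⟩

lemma card_le (hf : IsCyclePackingOn G f) : n ≤ G.toFinset.card := by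
  choose e he using fun i => Multiset.exists_mem_of_ne_zero (hf.1 i).2.1
  simpa using Finset.card_le_card_of_injOn (s := Finset.univ) e
    (fun i _ => Multiset.mem_toFinset.mpr (Multiset.mem_of_le (hf.1 i).1 (he i)))
    (fun i _ j _ hij => by_contra fun hne => hf.notMem_of_mem hne (he i) (hij ▸ he j))

lemma mono (hf : IsCyclePackingOn G f) (hGH : G ≤ H) : IsCyclePackingOn H f :=
  ⟨fun i => ⟨(hf.1 i).1.trans hGH, (hf.1 i).2⟩, hf.2⟩

lemma comp (hf : IsCyclePackingOn G f) {g : Fin m → Fin n} (hg : Function.Injective g) :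
    IsCyclePackingOn G (f ∘ g) :=
  ⟨fun i => hf.1 (g i), fun _ _ hij => hf.2 _ _ (hg.ne hij)⟩

lemma of_cons {e : Sym2 V} (hf : IsCyclePackingOn (e ::ₘ G) f) (he : ∀ i, e ∉ f i) :
    IsCyclePackingOn G f :=
  ⟨fun i => ⟨(Multiset.le_cons_of_notMem (he i)).mp (hf.1 i).1, (hf.1 i).2⟩, hf.2⟩

lemma append {g : Fin m → Multiset (Sym2 V)} (hf : IsCyclePackingOn G f)
    (hg : IsCyclePackingOn G g) (hfg : ∀ i j, Disjoint (support (f i)) (support (g j))) :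
    IsCyclePackingOn G (Fin.append f g) := by
  refine ⟨Fin.addCases (by simpa using hf.1) (by simpa using hg.1), fun i j hij => ?_⟩
  induction i using Fin.addCases with
  | left i => induction j using Fin.addCases with
    | left j => simpa using hf.2 i j (by simpa using hij)
    | right j => simpa using hfg i j
  | right i => induction j using Fin.addCases with
    | left j => simpa using (hfg j i).symm
    | right j => simpa using hg.2 i j (by simpa using hij)

lemma cons {C : Multiset (Sym2 V)} (hCG : C ≤ G) (hC : IsCycle C) (hf : IsCyclePackingOn G f)
    (hCf : ∀ i, Disjoint (support C) (support (f i))) :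
    IsCyclePackingOn G (Fin.cons C f : Fin (n + 1) → Multiset (Sym2 V)) := by
  refine ⟨Fin.cases ⟨hCG, hC⟩ hf.1, fun i j hij => ?_⟩
  induction i using Fin.cases with
  | zero => induction j using Fin.cases with
    | zero => exact absurd rfl hij
    | succ j => simpa using hCf j
  | succ i => induction j using Fin.cases with
    | zero => simpa using (hCf i).symm
    | succ j => simpa using hf.2 i j (by simpa using hij)

end IsCyclePackingOn

lemma bddAbove_setOf_isCyclePackingOn (G : Multiset (Sym2 V)) :
    BddAbove {n | ∃ f : Fin n → Multiset (Sym2 V), IsCyclePackingOn G f} :=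
  ⟨G.toFinset.card, by rintro _ ⟨_, hf⟩; exact hf.card_le⟩

lemma exists_isCyclePackingOn_cp (G : Multiset (Sym2 V)) :
    ∃ f : Fin (cp G) → Multiset (Sym2 V), IsCyclePackingOn G f :=
  Nat.sSup_mem ⟨0, by exact ⟨Fin.elim0, fun i => i.elim0, fun i => i.elim0⟩⟩
    (bddAbove_setOf_isCyclePackingOn G)

lemma le_cp {G : Multiset (Sym2 V)} {n : ℕ} {f : Fin n → Multiset (Sym2 V)}
    (hf : IsCyclePackingOn G f) : n ≤ cp G :=
  le_csSup (bddAbove_setOf_isCyclePackingOn G) ⟨f, hf⟩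

lemma exists_isCycle_cons_of_cp_cons {e : Sym2 V} {G : Multiset (Sym2 V)}
    (h : cp (e ::ₘ G) = cp G + 1) :
    ∃ E ≤ G, IsCycle (e ::ₘ E) ∧ ∃ f : Fin (cp G) → Multiset (Sym2 V),
      IsCyclePackingOn G f ∧ ∀ j, Disjoint (support (e ::ₘ E)) (support (f j)) := by
  obtain ⟨f, hf⟩ : ∃ f : Fin (cp G + 1) → Multiset (Sym2 V), IsCyclePackingOn (e ::ₘ G) f :=
    h ▸ exists_isCyclePackingOn_cp _
  obtain ⟨i, hi⟩ : ∃ i, e ∈ f i := by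
    by_contra! he
    have := le_cp (hf.of_cons he)
    omega
  refine ⟨(f i).erase e, Multiset.erase_le_iff_le_cons.mpr (hf.1 i).1, ?_, f ∘ i.succAbove,
    (hf.comp Fin.succAbove_right_injective).of_cons fun j =>
      hf.notMem_of_mem (i.succAbove_ne j).symm hi, fun j => ?_⟩ <;>
  rw [Multiset.cons_erase hi]
  exacts [(hf.1 i).2, hf.2 _ _ (i.succAbove_ne j).symm]

lemma support_cons_mk_subset {a b : V} {E G : Multiset (Sym2 V)} (ha : a ∈ support G)
    (hb : b ∈ support G) (hE : E ≤ G) : support (s(a, b) ::ₘ E) ⊆ support G := by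
  rw [support_cons_mk]
  exact Set.union_subset (Set.pair_subset ha hb) (support_mono hE)

end MG

theorem cp_three_edge_cut_combine_general {V : Type*} (G G1 G2 : Multiset (Sym2 V))
    (a1 a2 b1 b2 c1 c2 : V)
    (hG : G = s(a1, a2) ::ₘ s(b1, b2) ::ₘ s(c1, c2) ::ₘ (G1 + G2))
    (hdisj : Disjoint (MG.support G1) (MG.support G2))
    (ha1 : a1 ∈ MG.support G1) (hb1 : b1 ∈ MG.support G1)
    (ha2 : a2 ∈ MG.support G2) (hb2 : b2 ∈ MG.support G2)
    (hcp1 : MG.cp (s(a1, b1) ::ₘ G1) = MG.cp G1 + 1)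
    (hcp2 : MG.cp (s(a2, b2) ::ₘ G2) = MG.cp G2 + 1) :
    MG.cp G1 + MG.cp G2 + 1 ≤ MG.cp G := by
  open MG in
  obtain ⟨E1, hE1, hC1, f, hf, hC1f⟩ := exists_isCycle_cons_of_cp_cons hcp1
  obtain ⟨E2, hE2, hC2, g, hg, hC2g⟩ := exists_isCycle_cons_of_cp_cons hcp2
  have hC1G1 := support_cons_mk_subset ha1 hb1 hE1
  have hC2G2 := support_cons_mk_subset ha2 hb2 hE2
  have hfg : ∀ i j, Disjoint (support (f i)) (support (g j)) := fun i j =>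
    hdisj.mono (support_mono (hf.1 i).1) (support_mono (hg.1 j).1)
  have hG12 : G1 + G2 ≤ G := hG ▸ ((Multiset.le_cons_self _ _).trans
    (Multiset.le_cons_self _ _)).trans (Multiset.le_cons_self _ _)
  have hDG : s(a1, a2) ::ₘ s(b1, b2) ::ₘ (E1 + E2) ≤ G := hG ▸
    Multiset.cons_le_cons _ (Multiset.cons_le_cons _
      ((add_le_add hE1 hE2).trans (Multiset.le_cons_self _ _)))
  refine le_cp (((hf.mono ((Multiset.le_add_right _ _).trans hG12)).append
    (hg.mono ((Multiset.le_add_left _ _).trans hG12)) hfg).cons hDG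
    (hC1.exchange hC2 (hdisj.mono hC1G1 hC2G2)) fun k => ?_)
  rw [support_exchange, Set.disjoint_union_left]
  induction k using Fin.addCases with
  | left i => simpa using ⟨hC1f i, hdisj.symm.mono hC2G2 (support_mono (hf.1 i).1)⟩
  | right j => simpa using ⟨hdisj.mono hC1G1 (support_mono (hg.1 j).1), hC2g j⟩

/-- For a 3-edge-cut `{e_A, e_B, e_C}` separating `G` into `G1` and `G2`: if adding to
each side the edge joining its two attachments of `e_A` and `e_B` raises its `cp` by
one, then `cp G ≥ cp G1 + cp G2 + 1`. -/
theorem cp_three_edge_cut_combine {V : Type*} (G G1 G2 : Multiset (Sym2 V))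
    (a1 a2 b1 b2 c1 c2 : V)
    (hG : G = s(a1, a2) ::ₘ s(b1, b2) ::ₘ s(c1, c2) ::ₘ (G1 + G2))
    (hdisj : Disjoint (MG.support G1) (MG.support G2))
    (hc1 : MG.Conn G1) (hc2 : MG.Conn G2)
    (ha1 : a1 ∈ MG.support G1) (hb1 : b1 ∈ MG.support G1) (hc1' : c1 ∈ MG.support G1)
    (ha2 : a2 ∈ MG.support G2) (hb2 : b2 ∈ MG.support G2) (hc2' : c2 ∈ MG.support G2)
    (hcp1 : MG.cp (s(a1, b1) ::ₘ G1) = MG.cp G1 + 1)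
    (hcp2 : MG.cp (s(a2, b2) ::ₘ G2) = MG.cp G2 + 1) :
    MG.cp G1 + MG.cp G2 + 1 ≤ MG.cp G :=
  cp_three_edge_cut_combine_general G G1 G2 a1 a2 b1 b2 c1 c2 hG hdisj ha1 hb1 ha2 hb2 hcp1 hcp2
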